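/- Let N, n be positive integers, let u0 ∈ ℝ^N, let V ∈ ℝ^{N×n}, let Θ ∈ ℝ^{N×N} be a symmetric positive definite matrix, and let r : ℝ^N → ℝ^N be differentiable with Jacobian J(u) at each u. Define f : ℝ^n → ℝ by f(x) = r(u0 + V x)ᵀ Θ r(u0 + V x) (the squared Θ-norm of the residual). Then x* ∈ ℝ^n is a stationary point of f (i.e., ∇f(x*) = 0) if and only if x* solves the Petrov–Galerkin reduced-order equations Wᵀ r(u0 + V x*) = 0 with left reduced-order basis W = Θ J(u0 + V x*) V. -/

import Mathlib

/-!
By the chain rule, `x ↦ r(u0 + V x)` has Jacobian `J(u) V` at `x`, where `u = u0 + V x`.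
The product rule for the bilinear form `(a, b) ↦ aᵀ Θ b`, whose two terms agree because `Θ` is
symmetric, then gives `∇f(x) = 2 (J(u) V)ᵀ Θ r(u) = 2 (Θ J(u) V)ᵀ r(u)`, which vanishes exactly
when the Petrov–Galerkin equations hold.
-/

open Matrix

theorem Matrix.IsSymm.dotProduct_mulVec_comm {R ι : Type*} [CommSemiring R] [Fintype ι]
    {M : Matrix ι ι R} (hM : M.IsSymm) (v w : ι → R) :
    v ⬝ᵥ M *ᵥ w = w ⬝ᵥ M *ᵥ v := by
  rw [dotProduct_mulVec, ← mulVec_transpose, hM.eq, dotProduct_comm]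

section

variable {𝕜 : Type*} [NontriviallyNormedField 𝕜] [CompleteSpace 𝕜]
  {ι κ ν : Type*} [Fintype ι] [Fintype κ] [Fintype ν]

noncomputable def Matrix.toContinuousLinearMap₂' (M : Matrix ι κ 𝕜) :
    (ι → 𝕜) →L[𝕜] (κ → 𝕜) →L[𝕜] 𝕜 :=
  LinearMap.toContinuousLinearMap <| LinearMap.toContinuousLinearMap.toLinearMap ∘ₗ
    LinearMap.mk₂ 𝕜 (fun v w => v ⬝ᵥ M *ᵥ w) (fun _ _ _ => add_dotProduct _ _ _)
      (fun _ _ _ => smul_dotProduct _ _ _)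
      (fun _ _ _ => by rw [mulVec_add, dotProduct_add])
      (fun _ _ _ => by rw [mulVec_smul, dotProduct_smul])

@[simp]
theorem Matrix.toContinuousLinearMap₂'_apply (M : Matrix ι κ 𝕜) (v : ι → 𝕜) (w : κ → 𝕜) :
    M.toContinuousLinearMap₂' v w = v ⬝ᵥ M *ᵥ w :=
  rfl

theorem Matrix.toContinuousLinearMap₂'_comp_eq_zero_iff (M : Matrix ι ι 𝕜) (A : Matrix ι κ 𝕜)
    (B : Matrix κ ν 𝕜) (v : ι → 𝕜) :
    (M.toContinuousLinearMap₂' v).comp ((LinearMap.toContinuousLinearMap A.mulVecLin).comp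
        (LinearMap.toContinuousLinearMap B.mulVecLin)) = 0 ↔
      (M * A * B)ᵀ *ᵥ v = 0 := by
  rw [← dotProduct_eq_zero_iff, ContinuousLinearMap.ext_iff]
  refine forall_congr' fun h => ?_
  change v ⬝ᵥ M *ᵥ (A *ᵥ (B *ᵥ h)) = 0 ↔ _
  rw [mulVec_transpose, ← dotProduct_mulVec, mulVec_mulVec, mulVec_mulVec, Matrix.mul_assoc]

theorem HasFDerivAt.dotProduct_mulVec_self {E : Type*} [NormedAddCommGroup E] [NormedSpace 𝕜 E]
    {M : Matrix ι ι 𝕜} (hM : M.IsSymm) {g : E → ι → 𝕜} {g' : E →L[𝕜] ι → 𝕜} {x : E}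
    (hg : HasFDerivAt g g' x) :
    HasFDerivAt (fun y => g y ⬝ᵥ M *ᵥ g y)
      ((2 : 𝕜) • (M.toContinuousLinearMap₂' (g x)).comp g') x := by
  refine (M.toContinuousLinearMap₂'.hasFDerivAt_of_bilinear hg hg).congr_fderiv ?_
  ext h
  simp [hM.dotProduct_mulVec_comm (g' h), two_mul]

theorem HasFDerivAt.comp_const_add_mulVec {F : Type*} [NormedAddCommGroup F] [NormedSpace 𝕜 F]
    {r : (ι → 𝕜) → F} {r' : (ι → 𝕜) →L[𝕜] F} (u₀ : ι → 𝕜) (V : Matrix ι κ 𝕜) {x : κ → 𝕜}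
    (hr : HasFDerivAt r r' (u₀ + V *ᵥ x)) :
    HasFDerivAt (fun y => r (u₀ + V *ᵥ y))
      (r'.comp (LinearMap.toContinuousLinearMap V.mulVecLin)) x :=
  hr.comp x ((LinearMap.toContinuousLinearMap V.mulVecLin).hasFDerivAt.const_add u₀)

end

theorem stmt_1_general (N n : ℕ)
    (u0 : Fin N → ℝ) (V : Matrix (Fin N) (Fin n) ℝ)
    (Θ : Matrix (Fin N) (Fin N) ℝ) (hΘ : Θ.PosDef)
    (r : (Fin N → ℝ) → (Fin N → ℝ))
    (J : (Fin N → ℝ) → Matrix (Fin N) (Fin N) ℝ)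
    (hr : ∀ u, HasFDerivAt r (LinearMap.toContinuousLinearMap (J u).mulVecLin) u)
    (f : (Fin n → ℝ) → ℝ)
    (hf : ∀ x, f x = r (u0 + V.mulVec x) ⬝ᵥ Θ.mulVec (r (u0 + V.mulVec x)))
    (x : Fin n → ℝ) :
    fderiv ℝ f x = 0 ↔
      (Θ * J (u0 + V.mulVec x) * V)ᵀ.mulVec (r (u0 + V.mulVec x)) = 0 := by
  have hΘ_symm : Θ.IsSymm := isHermitian_iff_isSymm.1 hΘ.isHermitian
  have hf' := ((hr (u0 + V *ᵥ x)).comp_const_add_mulVec u0 V).dotProduct_mulVec_self hΘ_symm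
  rw [funext hf, hf'.fderiv, smul_eq_zero, or_iff_right two_ne_zero,
    toContinuousLinearMap₂'_comp_eq_zero_iff]

/-- For SPD `Θ` and `f(x) = ‖r(u0 + V x)‖²_Θ`, a point `x*` is a stationary point of `f`
(`∇f(x*) = 0`, i.e. `fderiv ℝ f x* = 0`) iff it solves the Petrov–Galerkin reduced-order
equations `Wᵀ r(u0 + V x*) = 0` with left ROB `W = Θ J(u0 + V x*) V`. -/
theorem stmt_1 (N n : ℕ) (hN : 0 < N) (hn : 0 < n)
    (u0 : Fin N → ℝ) (V : Matrix (Fin N) (Fin n) ℝ)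
    (Θ : Matrix (Fin N) (Fin N) ℝ) (hΘ : Θ.PosDef)
    (r : (Fin N → ℝ) → (Fin N → ℝ))
    (J : (Fin N → ℝ) → Matrix (Fin N) (Fin N) ℝ)
    (hr : ∀ u, HasFDerivAt r (LinearMap.toContinuousLinearMap (J u).mulVecLin) u)
    (f : (Fin n → ℝ) → ℝ)
    (hf : ∀ x, f x = r (u0 + V.mulVec x) ⬝ᵥ Θ.mulVec (r (u0 + V.mulVec x)))
    (x : Fin n → ℝ) :
    fderiv ℝ f x = 0 ↔
      (Θ * J (u0 + V.mulVec x) * V)ᵀ.mulVec (r (u0 + V.mulVec x)) = 0 :=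
  stmt_1_general N n u0 V Θ hΘ r J hr f hf x
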